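/- The function A(r) = r·(1 - P(r))² is continuous on [0,∞) and strictly increasing on (0,∞), satisfies A(0) = 0, and A(r) → 2/π as r → ∞. Consequently A is a bijection from [0,∞) onto [0, 2/π). -/

import Mathlib

open MeasureTheory Real Filter

/-- The standard normal density. -/
noncomputable def gphi (u : ℝ) : ℝ := Real.exp (-u ^ 2 / 2) / Real.sqrt (2 * Real.pi)

/-- The standard normal CDF. -/
noncomputable def gPhi (u : ℝ) : ℝ := ∫ s in Set.Iic u, gphi s

/-- The standard normal tail. -/
noncomputable def gPhiBar (u : ℝ) : ℝ := 1 - gPhi u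

/-- The inverse Mills ratio. -/
noncomputable def mills (u : ℝ) : ℝ := gphi u / gPhiBar u

/-- P(r) = E[tanh²(√r Z)]. -/
noncomputable def Pfun (r : ℝ) : ℝ := ∫ z : ℝ, Real.tanh (Real.sqrt r * z) ^ 2 * gphi z

/-- B(q). -/
noncomputable def Bfun (κ q : ℝ) : ℝ :=
  (1 - q) * ∫ z : ℝ, mills ((κ - Real.sqrt q * z) / Real.sqrt (1 - q)) ^ 2 * gphi z

/-- C_κ. -/
noncomputable def Ckappa (κ : ℝ) : ℝ := ∫ z : ℝ, max (κ - z) 0 ^ 2 * gphi z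

/-- The critical capacity. -/
noncomputable def alphac (κ : ℝ) : ℝ := 2 / (Real.pi * Ckappa κ)

/-- A(r) = r (1 - P(r))². -/
noncomputable def Afun (r : ℝ) : ℝ := r * (1 - Pfun r) ^ 2

/-!
Gaussian integration by parts, `𝔼[f'(Z)] = 𝔼[Z f(Z)]`, applied to `f z = tanh (√r z)` gives
`√r (1 - P(r)) = h(√r)` with `h u = 𝔼[Z tanh(uZ)] = 𝔼[|Z| tanh(u|Z|)]`, so `A(r) = h(√r)²`.
The integrand `|z| tanh(u|z|)` is strictly increasing in `u ≥ 0` and bounded by `|z|`, so `h` is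
continuous, strictly increasing from `h 0 = 0`, and tends to `𝔼|Z| = √(2/π)` by dominated
convergence. The bijection onto `[0, 2/π)` then follows from the intermediate value theorem.
-/

open Set Topology

namespace Real

theorem hasDerivAt_tanh (x : ℝ) : HasDerivAt tanh (1 - tanh x ^ 2) x := by
  have h := (hasDerivAt_sinh x).div (hasDerivAt_cosh x) (cosh_pos x).ne'
  rw [show sinh / cosh = tanh from funext fun y => (tanh_eq_sinh_div_cosh y).symm] at h
  refine h.congr_deriv ?_
  rw [tanh_eq_sinh_div_cosh, div_pow]
  field_simp

@[fun_prop]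
theorem continuous_tanh : Continuous tanh :=
  continuous_iff_continuousAt.2 fun x => (hasDerivAt_tanh x).continuousAt

theorem tanh_strictMono : StrictMono tanh :=
  strictMono_of_hasDerivAt_pos hasDerivAt_tanh fun x => sub_pos.2 (tanh_sq_lt_one x)

theorem tanh_eq_one_sub (x : ℝ) : tanh x = 1 - 2 / (exp (2 * x) + 1) := by
  have h : exp (2 * x) = exp x * exp x := by rw [← exp_add]; ring_nf
  rw [tanh_eq, h, exp_neg]
  field_simp
  ring

theorem tendsto_tanh_atTop : Tendsto tanh atTop (𝓝 1) := by
  have hexp : Tendsto (fun x => exp (2 * x) + 1) atTop atTop :=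
    tendsto_atTop_add_const_right _ _
      (tendsto_exp_atTop.comp (tendsto_id.const_mul_atTop two_pos))
  have h := (tendsto_const_nhds (x := (1 : ℝ))).sub
    ((tendsto_const_nhds (x := (2 : ℝ))).div_atTop hexp)
  rw [sub_zero] at h
  exact h.congr fun x => (tanh_eq_one_sub x).symm

end Real

open ProbabilityTheory in
theorem gphi_eq_gaussianPDFReal : gphi = gaussianPDFReal 0 1 := by
  ext z
  simp [gphi, gaussianPDFReal, div_eq_inv_mul]

theorem gphi_pos (z : ℝ) : 0 < gphi z := by
  unfold gphi; positivity

@[fun_prop]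
theorem continuous_gphi : Continuous gphi := by
  unfold gphi; fun_prop

theorem integrable_gphi : Integrable gphi := by
  rw [gphi_eq_gaussianPDFReal]
  exact ProbabilityTheory.integrable_gaussianPDFReal 0 1

theorem integral_gphi : ∫ z, gphi z = 1 := by
  rw [gphi_eq_gaussianPDFReal]
  exact ProbabilityTheory.integral_gaussianPDFReal_eq_one 0 one_ne_zero

theorem hasDerivAt_gphi (z : ℝ) : HasDerivAt gphi (-z * gphi z) z := by
  have h : HasDerivAt (fun x : ℝ => -x ^ 2 / 2) (-z) z :=
    ((hasDerivAt_pow 2 z).neg.div_const 2).congr_deriv (by norm_num; ring)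
  refine (h.exp.div_const (√(2 * π))).congr_deriv ?_
  simp only [gphi]
  ring

theorem tendsto_gphi_atTop : Tendsto gphi atTop (𝓝 0) := by
  have h : Tendsto (fun z : ℝ => -z ^ 2 / 2) atTop atBot := by
    simpa only [neg_div, Function.comp_def] using tendsto_neg_atTop_atBot.comp
      ((tendsto_pow_atTop two_ne_zero).atTop_div_const (two_pos : (0 : ℝ) < 2))
  rw [← zero_div (√(2 * π))]
  exact (tendsto_exp_atBot.comp h).div_const _

theorem integrable_mul_gphi : Integrable fun z => z * gphi z := by
  have h := (integrable_mul_exp_neg_mul_sq (b := 1 / 2) (by norm_num)).div_const (√(2 * π))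
  refine h.congr (.of_forall fun z => ?_)
  simp only [gphi]
  ring_nf

theorem integral_abs_mul_gphi : ∫ z, |z| * gphi z = √(2 / π) := by
  have heven : ∀ z, |z| * gphi z = |z| * gphi |z| := fun z => by simp [gphi]
  have hIoi : ∫ z in Ioi 0, z * gphi z = gphi 0 := by
    have := integral_Ioi_of_hasDerivAt_of_tendsto' (f := fun z => -gphi z) (a := 0)
      (fun z _ => (hasDerivAt_gphi z).neg) ?_ tendsto_gphi_atTop.neg
    · simpa using this
    · simpa using integrable_mul_gphi.integrableOn
  rw [funext heven, integral_comp_abs (f := fun z => z * gphi z), hIoi]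
  simp only [gphi]
  rw [eq_comm, sqrt_eq_iff_eq_sq (by positivity) (by positivity)]
  norm_num [div_pow]
  field_simp
  norm_num [sq_sqrt pi_pos.le]
  ring

theorem integral_deriv_mul_gphi {f f' : ℝ → ℝ} {C C' : ℝ} (hf : ∀ z, HasDerivAt f (f' z) z)
    (hfC : ∀ z, |f z| ≤ C) (hf'C : ∀ z, |f' z| ≤ C') :
    ∫ z, f' z * gphi z = ∫ z, z * f z * gphi z := by
  have hfm : AEStronglyMeasurable f := (continuous_iff_continuousAt.2 fun z =>
    (hf z).continuousAt).aestronglyMeasurable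
  have hf'm : AEStronglyMeasurable f' := by
    rw [show f' = deriv f from funext fun z => (hf z).deriv.symm]
    exact (measurable_deriv f).aestronglyMeasurable
  have hfz : Integrable fun z => f z * (z * gphi z) :=
    integrable_mul_gphi.bdd_mul hfm (.of_forall hfC)
  have key := integral_mul_deriv_eq_deriv_mul_of_integrable (u := f) (v := gphi)
    (fun z _ => hf z) (fun z _ => hasDerivAt_gphi z) ?_
    (integrable_gphi.bdd_mul hf'm (.of_forall hf'C))
    (integrable_gphi.bdd_mul hfm (.of_forall hfC))
  · have hneg : ∫ z, f z * (-z * gphi z) = -∫ z, z * f z * gphi z := by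
      rw [← integral_neg]; congr 1 with z; ring
    rw [hneg] at key
    exact (neg_injective key).symm
  · exact hfz.neg.congr (.of_forall fun z => by simp only [Pi.mul_apply, Pi.neg_apply]; ring)

theorem mul_tanh_mul_eq_abs (u z : ℝ) : z * tanh (u * z) = |z| * tanh (u * |z|) := by
  rcases le_total 0 z with hz | hz
  · rw [abs_of_nonneg hz]
  · rw [abs_of_nonpos hz, mul_neg, tanh_neg]; ring

theorem norm_mul_tanh_mul_gphi_le (u z : ℝ) : ‖z * tanh (u * z) * gphi z‖ ≤ |z| * gphi z := by
  rw [Real.norm_eq_abs, abs_mul, abs_mul, abs_of_pos (gphi_pos z)]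
  exact mul_le_mul_of_nonneg_right
    (mul_le_of_le_one_right (abs_nonneg z) (abs_tanh_lt_one _).le) (gphi_pos z).le

theorem integrable_abs_mul_gphi : Integrable fun z => |z| * gphi z :=
  integrable_mul_gphi.abs.congr (.of_forall fun z => by simp [abs_mul, abs_of_pos (gphi_pos z)])

theorem integrable_mul_tanh_mul_gphi (u : ℝ) : Integrable fun z => z * tanh (u * z) * gphi z :=
  integrable_abs_mul_gphi.mono' (by fun_prop) (.of_forall (norm_mul_tanh_mul_gphi_le u))

noncomputable def zTanhMean (u : ℝ) : ℝ := ∫ z, z * tanh (u * z) * gphi z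

theorem mul_one_sub_integral_tanh_sq (c : ℝ) :
    c * (1 - ∫ z, tanh (c * z) ^ 2 * gphi z) = zTanhMean c := by
  have hderiv (z : ℝ) : HasDerivAt (fun z => tanh (c * z)) (c * (1 - tanh (c * z) ^ 2)) z :=
    ((hasDerivAt_tanh (c * z)).comp z ((hasDerivAt_id z).const_mul c)).congr_deriv (by ring)
  have hbound (z : ℝ) : |c * (1 - tanh (c * z) ^ 2)| ≤ |c| := by
    rw [abs_mul]
    refine mul_le_of_le_one_right (abs_nonneg c) (abs_le.2 ⟨?_, ?_⟩) <;>
      nlinarith [tanh_sq_lt_one (c * z), sq_nonneg (tanh (c * z))]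
  have htanh_sq : Integrable fun z => tanh (c * z) ^ 2 * gphi z :=
    integrable_gphi.bdd_mul (c := 1) (by fun_prop) (.of_forall fun z => by
      rw [Real.norm_eq_abs, abs_of_nonneg (sq_nonneg _)]; exact (tanh_sq_lt_one _).le)
  calc c * (1 - ∫ z, tanh (c * z) ^ 2 * gphi z)
      = c * ∫ z, (gphi z - tanh (c * z) ^ 2 * gphi z) := by
        rw [integral_sub integrable_gphi htanh_sq, integral_gphi]
    _ = ∫ z, c * (1 - tanh (c * z) ^ 2) * gphi z := by
        rw [← integral_const_mul]; congr 1 with z; ring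
    _ = zTanhMean c :=
        integral_deriv_mul_gphi hderiv (fun z => (abs_tanh_lt_one (c * z)).le) hbound

theorem Afun_eq_zTanhMean_sq {r : ℝ} (hr : 0 ≤ r) : Afun r = zTanhMean √r ^ 2 := by
  rw [← mul_one_sub_integral_tanh_sq, ← Pfun, mul_pow, sq_sqrt hr, Afun]

theorem zTanhMean_zero : zTanhMean 0 = 0 := by simp [zTanhMean]

theorem zTanhMean_strictMonoOn : StrictMonoOn zTanhMean (Ici 0) := by
  intro a ha b hb hab
  have hpos : 0 < ∫ z, (z * tanh (b * z) * gphi z - z * tanh (a * z) * gphi z) := by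
    refine integral_pos_of_integrable_nonneg_nonzero (x := 1) (by fun_prop)
      ((integrable_mul_tanh_mul_gphi b).sub (integrable_mul_tanh_mul_gphi a)) (fun z => ?_) ?_
    · have : tanh (a * |z|) ≤ tanh (b * |z|) :=
        tanh_strictMono.monotone (mul_le_mul_of_nonneg_right hab.le (abs_nonneg z))
      simp only [Pi.zero_apply, mul_tanh_mul_eq_abs _ z, ← sub_mul, ← mul_sub]
      exact mul_nonneg (mul_nonneg (abs_nonneg z) (sub_nonneg.2 this)) (gphi_pos z).le
    · simp only [mul_one, one_mul, ← sub_mul]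
      exact mul_ne_zero (sub_ne_zero.2 (tanh_strictMono hab).ne') (gphi_pos 1).ne'
  rw [integral_sub (integrable_mul_tanh_mul_gphi b) (integrable_mul_tanh_mul_gphi a)] at hpos
  exact sub_pos.1 hpos

theorem zTanhMean_nonneg {u : ℝ} (hu : 0 ≤ u) : 0 ≤ zTanhMean u :=
  zTanhMean_zero ▸ zTanhMean_strictMonoOn.monotoneOn self_mem_Ici hu hu

theorem continuous_zTanhMean : Continuous zTanhMean :=
  continuous_of_dominated (fun u => (integrable_mul_tanh_mul_gphi u).aestronglyMeasurable)
    (fun u => .of_forall (norm_mul_tanh_mul_gphi_le u)) integrable_abs_mul_gphi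
    (.of_forall fun z => by fun_prop)

theorem tendsto_zTanhMean_atTop : Tendsto zTanhMean atTop (𝓝 √(2 / π)) := by
  rw [← integral_abs_mul_gphi]
  refine tendsto_integral_filter_of_dominated_convergence _
    (.of_forall fun u => (integrable_mul_tanh_mul_gphi u).aestronglyMeasurable)
    (.of_forall fun u => .of_forall (norm_mul_tanh_mul_gphi_le u)) integrable_abs_mul_gphi
    (.of_forall fun z => ?_)
  simp only [mul_tanh_mul_eq_abs _ z]
  rcases (abs_nonneg z).eq_or_lt with hz | hz
  · simp [← hz]
  · have := tendsto_tanh_atTop.comp (tendsto_id.atTop_mul_const hz)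
    simpa using (this.const_mul |z|).mul_const (gphi z)

theorem ContinuousOn.bijOn_Ici_Ico_of_strictMonoOn {f : ℝ → ℝ} {a l : ℝ}
    (hc : ContinuousOn f (Ici a)) (hm : StrictMonoOn f (Ici a)) (hl : Tendsto f atTop (𝓝 l)) :
    BijOn f (Ici a) (Ico (f a) l) := by
  have hle {x : ℝ} (hx : a ≤ x) : f x ≤ l :=
    ge_of_tendsto hl (eventually_atTop.2 ⟨x, fun y hy => hm.monotoneOn hx (hx.trans hy) hy⟩)
  refine ⟨fun x hx => ⟨hm.monotoneOn self_mem_Ici hx hx, ?_⟩, hm.injOn, ?_⟩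
  · have hx1 : a ≤ x + 1 := by linarith [mem_Ici.1 hx]
    exact (hm hx hx1 (lt_add_one x)).trans_le (hle hx1)
  · exact isPreconnected_Ici.intermediate_value_Ico self_mem_Ici
      (le_principal_iff.2 (Ici_mem_atTop a)) hc hl

theorem Afun_strictMonoOn : StrictMonoOn Afun (Ici 0) := by
  intro a ha b hb hab
  rw [Afun_eq_zTanhMean_sq ha, Afun_eq_zTanhMean_sq hb]
  exact pow_lt_pow_left₀ (zTanhMean_strictMonoOn (sqrt_nonneg a) (sqrt_nonneg b)
    (sqrt_lt_sqrt ha hab)) (zTanhMean_nonneg (sqrt_nonneg a)) two_ne_zero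

theorem continuousOn_Afun : ContinuousOn Afun (Ici 0) :=
  ((continuous_zTanhMean.comp continuous_sqrt).pow 2).continuousOn.congr
    fun _ hr => Afun_eq_zTanhMean_sq hr

theorem tendsto_Afun_atTop : Tendsto Afun atTop (𝓝 (2 / π)) := by
  have h := (tendsto_zTanhMean_atTop.comp tendsto_sqrt_atTop).pow 2
  rw [sq_sqrt (by positivity)] at h
  exact h.congr' (eventually_atTop.2 ⟨0, fun r hr => (Afun_eq_zTanhMean_sq hr).symm⟩)

theorem stmt_5 :
    ContinuousOn Afun (Set.Ici (0 : ℝ)) ∧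
    StrictMonoOn Afun (Set.Ioi (0 : ℝ)) ∧
    Afun 0 = 0 ∧
    Filter.Tendsto Afun Filter.atTop (nhds (2 / Real.pi)) ∧
    Set.BijOn Afun (Set.Ici (0 : ℝ)) (Set.Ico (0 : ℝ) (2 / Real.pi)) := by
  have hA0 : Afun 0 = 0 := by simp [Afun]
  refine ⟨continuousOn_Afun, Afun_strictMonoOn.mono Ioi_subset_Ici_self, hA0,
    tendsto_Afun_atTop, ?_⟩
  simpa only [hA0] using
    continuousOn_Afun.bijOn_Ici_Ico_of_strictMonoOn Afun_strictMonoOn tendsto_Afun_atTop
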